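/- arXiv:1406.5863 — 2 statements merged into one kernel-verified Lean document; each statement's English description precedes it below -/
import Mathlib

section
/- For probability measures P, Q on a measurable space with P absolutely continuous with respect to Q, the total variation distance satisfies ‖P − Q‖_TV ≤ √(K(P,Q)/2), where K(P,Q) = ∫ log(dP/dQ) dP is the Kullback–Leibler divergence (Pinsker's inequality). -/
open MeasureTheory Real

lemma log_ge_aux {x : ℝ} (hx : 1 ≤ x) : 2*(x-1)/(x+1) ≤ Real.log x := by
  have key : MonotoneOn (fun y : ℝ => Real.log y - (2 - 4/(y+1))) (Set.Ici 1) := by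
    have hd : ∀ y ∈ Set.Ici (1:ℝ), HasDerivAt (fun y : ℝ => Real.log y - (2 - 4/(y+1)))
        (1/y - 4/(y+1)^2) y := by
      intro y hy
      have hy0 : (0:ℝ) < y := lt_of_lt_of_le one_pos hy
      have h1 : HasDerivAt (fun y : ℝ => Real.log y) (1/y) y := by
        simpa [one_div] using Real.hasDerivAt_log hy0.ne'
      have h2 : HasDerivAt (fun y : ℝ => y + 1) 1 y := (hasDerivAt_id y).add_const 1
      have h3 : HasDerivAt (fun y : ℝ => 4/(y+1)) ((0*(y+1) - 4*1)/(y+1)^2) y :=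
        (hasDerivAt_const y 4).div h2 (by positivity)
      have := h1.sub ((hasDerivAt_const y 2).sub h3)
      exact this.congr_deriv (by ring)
    apply monotoneOn_of_deriv_nonneg (convex_Ici 1)
    · exact fun y hy => ((hd y hy).continuousAt.continuousWithinAt)
    · intro y hy
      rw [interior_Ici] at hy
      exact ((hd y (Set.mem_Ici.2 (le_of_lt hy))).differentiableAt).differentiableWithinAt
    · intro y hy
      rw [interior_Ici] at hy
      rw [(hd y (Set.mem_Ici.2 (le_of_lt hy))).deriv]
      have hy0 : (0:ℝ) < y := lt_trans one_pos hy
      rw [sub_nonneg, div_le_div_iff₀ (by positivity) (by positivity)]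
      nlinarith [sq_nonneg (y-1)]
  have := key (Set.self_mem_Ici) (Set.mem_Ici.2 hx) hx
  simp only [Real.log_one] at this
  have hx1 : (0:ℝ) < x + 1 := by linarith
  have h2 : 2*(x-1)/(x+1) = 2 - 4/(x+1) := by field_simp; ring
  rw [h2]; linarith

lemma log_le_aux {x : ℝ} (hx0 : 0 < x) (hx : x ≤ 1) : Real.log x ≤ 2*(x-1)/(x+1) := by
  have h := log_ge_aux (x := 1/x) (by rw [le_div_iff₀ hx0]; linarith)
  rw [Real.log_div one_ne_zero hx0.ne', Real.log_one] at h
  have h2 : 2*(1/x-1)/(1/x+1) = -(2*(x-1)/(x+1)) := by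
    rw [div_eq_iff (by positivity)]
    field_simp
    ring
  rw [h2] at h
  linarith

/-- derivative sign lemma packaged into the master inequality -/
lemma key_ineq {x : ℝ} (hx : 0 ≤ x) :
    3*(x-1)^2/(2*(x+2)) ≤ x * Real.log x - x + 1 := by
  rcases eq_or_lt_of_le hx with h0 | h0
  · simp [← h0]; norm_num
  set F : ℝ → ℝ := fun y => y * Real.log y - y + 1 - 3*(y-1)^2/(2*(y+2)) with hF
  have hd : ∀ y : ℝ, 0 < y → HasDerivAt F
      (Real.log y - (3*2*(y-1)*(2*(y+2)) - 3*(y-1)^2*2)/(2*(y+2))^2) y := by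
    intro y hy
    have h1 : HasDerivAt (fun y : ℝ => y * Real.log y) (1 * Real.log y + y * (1/y)) y := by
      exact (hasDerivAt_id y).mul (by simpa [one_div] using Real.hasDerivAt_log hy.ne')
    have h2 : HasDerivAt (fun y : ℝ => 3*(y-1)^2) (3*(2*(y-1))) y := by
      have := (((hasDerivAt_id y).sub_const 1).pow 2).const_mul (3:ℝ)
      simpa [mul_comm, mul_assoc, mul_left_comm] using this
    have h3 : HasDerivAt (fun y : ℝ => 2*(y+2)) 2 y := by
      simpa using ((hasDerivAt_id y).add_const 2).const_mul (2:ℝ)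
    have h4 : HasDerivAt (fun y : ℝ => 3*(y-1)^2/(2*(y+2)))
        ((3*(2*(y-1))*(2*(y+2)) - 3*(y-1)^2*2)/(2*(y+2))^2) y := h2.div h3 (by positivity)
    have := ((h1.sub (hasDerivAt_id y)).add_const 1).sub h4
    exact this.congr_deriv (by field_simp; ring)
  have hsign : ∀ y : ℝ, 0 < y →
      (Real.log y - (3*2*(y-1)*(2*(y+2)) - 3*(y-1)^2*2)/(2*(y+2))^2)
        = Real.log y - (3*(y-1)*(y+5))/(2*(y+2)^2) := by
    intro y hy
    congr 1
    rw [div_eq_div_iff (by positivity) (by positivity)]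
    ring
  have hmono : MonotoneOn F (Set.Ici 1) := by
    apply monotoneOn_of_deriv_nonneg (convex_Ici 1)
    · exact fun y hy => ((hd y (lt_of_lt_of_le one_pos hy)).continuousAt.continuousWithinAt)
    · intro y hy
      rw [interior_Ici] at hy
      exact ((hd y (lt_trans one_pos hy)).differentiableAt).differentiableWithinAt
    · intro y hy
      rw [interior_Ici] at hy
      have hy0 : (0:ℝ) < y := lt_trans one_pos hy
      rw [(hd y hy0).deriv, hsign y hy0, sub_nonneg]
      have h5 := log_ge_aux (le_of_lt hy)
      refine le_trans ?_ h5
      rw [div_le_div_iff₀ (by positivity) (by positivity)]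
      nlinarith [mul_nonneg (sq_nonneg (y-1)) (sub_nonneg.2 (le_of_lt (Set.mem_Ioi.1 hy)))]
  have hanti : AntitoneOn F (Set.Ioc 0 1) := by
    apply antitoneOn_of_deriv_nonpos (convex_Ioc 0 1)
    · exact fun y hy => ((hd y hy.1).continuousAt.continuousWithinAt)
    · intro y hy
      rw [interior_Ioc] at hy
      exact ((hd y hy.1).differentiableAt).differentiableWithinAt
    · intro y hy
      rw [interior_Ioc] at hy
      have hy0 : (0:ℝ) < y := hy.1
      rw [(hd y hy0).deriv, hsign y hy0, sub_nonpos]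
      have h5 := log_le_aux hy0 (le_of_lt hy.2)
      refine le_trans h5 ?_
      rw [div_le_div_iff₀ (by positivity) (by positivity)]
      nlinarith [mul_nonneg (sq_nonneg (y-1)) (sub_nonneg.2 hy.2.le)]
  have hF1 : F 1 = 0 := by simp [hF]
  have hge : 0 ≤ F x := by
    rcases le_or_gt x 1 with hx1 | hx1
    · have := hanti (Set.mem_Ioc.2 ⟨h0, hx1⟩) (Set.mem_Ioc.2 ⟨one_pos, le_refl 1⟩) hx1
      rw [hF1] at this; exact this
    · have := hmono (Set.mem_Ici.2 (le_refl 1)) (Set.mem_Ici.2 hx1.le) hx1.le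
      rw [hF1] at this; exact this
  have : F x = x * Real.log x - x + 1 - 3*(x-1)^2/(2*(x+2)) := rfl
  linarith [hge, this ▸ hge]

/-- Pinsker's inequality: for probability measures `P ≪ Q`, the total variation
distance `sup_A |P(A) - Q(A)|` is bounded by `√(K(P,Q)/2)`, where
`K(P,Q) = ∫ log(dP/dQ) dP` is the Kullback–Leibler divergence. -/
theorem stmt5 {X : Type*} [MeasurableSpace X] (P Q : Measure X)
    [IsProbabilityMeasure P] [IsProbabilityMeasure Q] (hPQ : P ≪ Q)
    (hint : Integrable (fun x => Real.log (P.rnDeriv Q x).toReal) P) :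
    (⨆ A : {A : Set X // MeasurableSet A}, |(P A.1).toReal - (Q A.1).toReal|)
      ≤ Real.sqrt ((∫ x, Real.log (P.rnDeriv Q x).toReal ∂P) / 2) := by
  set f : X → ℝ := fun x => (P.rnDeriv Q x).toReal with hf_def
  have hf_meas : Measurable f := (Measure.measurable_rnDeriv P Q).ennreal_toReal
  have hf_nonneg : ∀ x, 0 ≤ f x := fun x => ENNReal.toReal_nonneg
  have hf_int : Integrable f Q := Measure.integrable_toReal_rnDeriv
  have hf_int1 : ∫ x, f x ∂Q = 1 := by
    rw [hf_def, Measure.integral_toReal_rnDeriv hPQ]; simp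
  have hfl_int : Integrable (fun x => f x * Real.log (f x)) Q := by
    have := (integrable_rnDeriv_smul_iff (f := fun x => Real.log ((P.rnDeriv Q x).toReal)) hPQ).mpr hint
    simpa [smul_eq_mul] using this
  have hKL : ∫ x, Real.log (f x) ∂P = ∫ x, f x * Real.log (f x) ∂Q := by
    rw [← integral_rnDeriv_smul (f := fun x => Real.log ((P.rnDeriv Q x).toReal)) hPQ]
    simp [smul_eq_mul]
    rfl
  set KL := ∫ x, f x * Real.log (f x) ∂Q with hKL_def
  have hg_int : Integrable (fun x => f x * Real.log (f x) - f x + 1) Q :=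
    (hfl_int.sub hf_int).add (integrable_const 1)
  have hg_nonneg : ∀ x, 0 ≤ f x * Real.log (f x) - f x + 1 := by
    intro x
    have h1 := key_ineq (hf_nonneg x)
    have h2 : 0 ≤ 3*(f x-1)^2/(2*(f x+2)) := by positivity
    linarith
  have hg_int_eq : ∫ x, (f x * Real.log (f x) - f x + 1) ∂Q = KL := by
    have h1 := integral_add (μ := Q) (hfl_int.sub hf_int) (integrable_const (1:ℝ))
    have h2 := integral_sub (μ := Q) hfl_int hf_int
    simp only [Pi.sub_apply, Pi.add_apply] at h1 h2
    rw [h1, h2, hf_int1]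
    simp [hKL_def]
  have hKL_nonneg : 0 ≤ KL := hg_int_eq ▸ integral_nonneg hg_nonneg
  -- the chi-square-like quantity
  set u : X → ℝ := fun x => (f x - 1)^2 / (f x + 2) with hu_def
  have hu_nonneg : ∀ x, 0 ≤ u x := fun x => by
    have := hf_nonneg x; positivity
  have hu_le : ∀ x, u x ≤ (2/3) * (f x * Real.log (f x) - f x + 1) := by
    intro x
    have h1 := key_ineq (hf_nonneg x)
    have hne : f x + 2 ≠ 0 := by have := hf_nonneg x; positivity
    have h2 : u x = (2/3) * (3*(f x-1)^2/(2*(f x+2))) := by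
      rw [hu_def]; field_simp
    rw [h2]
    linarith
  have hu_meas : Measurable u := ((hf_meas.sub measurable_const).pow_const 2).div
    (hf_meas.add measurable_const)
  have hu_int : Integrable u Q := by
    refine Integrable.mono' (hg_int.const_mul (2/3)) hu_meas.aestronglyMeasurable ?_
    exact ae_of_all _ fun x => by
      rw [Real.norm_eq_abs, abs_of_nonneg (hu_nonneg x)]; exact hu_le x
  set A := ∫ x, u x ∂Q with hA_def
  have hA_nonneg : 0 ≤ A := integral_nonneg hu_nonneg
  have hA_le : A ≤ (2/3) * KL := by
    calc A ≤ ∫ x, (2/3) * (f x * Real.log (f x) - f x + 1) ∂Q :=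
          integral_mono hu_int (hg_int.const_mul _) hu_le
      _ = (2/3) * KL := by rw [integral_const_mul, hg_int_eq]
  -- the L1 distance
  have hd_int : Integrable (fun x => f x - 1) Q := hf_int.sub (integrable_const 1)
  have habs_int : Integrable (fun x => |f x - 1|) Q := hd_int.abs
  set I := ∫ x, |f x - 1| ∂Q with hI_def
  have hI_nonneg : 0 ≤ I := integral_nonneg fun x => abs_nonneg _
  have hI_sq : I^2 ≤ 3 * A := by
    rcases eq_or_lt_of_le hA_nonneg with hA0 | hA0
    · -- A = 0 : then u = 0 a.e., so f = 1 a.e., so I = 0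
      have hu0 : u =ᵐ[Q] 0 := by
        rw [← integral_eq_zero_iff_of_nonneg hu_nonneg hu_int]
        exact hA0.symm
      have : (fun x => |f x - 1|) =ᵐ[Q] 0 := by
        filter_upwards [hu0] with x hx
        have hne : f x + 2 ≠ 0 := by have := hf_nonneg x; positivity
        have : (f x - 1)^2 / (f x + 2) = 0 := hx
        rw [div_eq_zero_iff] at this
        rcases this with h | h
        · simp [pow_eq_zero_iff] at h
          simp [sub_eq_zero.1 h]
        · exact absurd h hne
      have hI0 : I = 0 := by rw [hI_def, integral_congr_ae this]; simp
      rw [hI0, ← hA0]; norm_num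
    · -- A > 0 : the AM-GM trick with t = √(3/A)
      set t := Real.sqrt 3 / Real.sqrt A with ht_def
      have ht_pos : 0 < t := by
        apply div_pos (Real.sqrt_pos.2 (by norm_num)) (Real.sqrt_pos.2 hA0)
      have hpt : ∀ x, |f x - 1| ≤ (t * u x + (f x + 2)/t)/2 := by
        intro x
        have hne : (0:ℝ) < f x + 2 := by have := hf_nonneg x; positivity
        have huv : u x * (f x + 2) = (f x - 1)^2 := div_mul_cancel₀ _ hne.ne'
        have hsq := sq_nonneg (t * |f x - 1| - (f x + 2))
        have habs : |f x - 1|^2 = (f x - 1)^2 := sq_abs _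
        have h5 : (t*|f x - 1|)^2 = t^2 * (u x * (f x + 2)) := by rw [huv, ← habs]; ring
        have hw : (f x + 2)/t * t = f x + 2 := div_mul_cancel₀ _ ht_pos.ne'
        have hmain : 2 * |f x - 1| ≤ t * u x + (f x + 2)/t := by
          nlinarith [hsq, h5, hw, mul_pos ht_pos hne, abs_nonneg (f x - 1),
            mul_nonneg (mul_nonneg ht_pos.le (hu_nonneg x)) hne.le]
        linarith
      have hint_rhs : Integrable (fun x => (t * u x + (f x + 2)/t)/2) Q := by
        exact (((hu_int.const_mul t).add (((hf_int.add (integrable_const 2)).div_const t))).div_const 2)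
      have hIle : I ≤ (t * A + 3/t)/2 := by
        calc I ≤ ∫ x, (t * u x + (f x + 2)/t)/2 ∂Q := integral_mono habs_int hint_rhs hpt
          _ = (t * A + 3/t)/2 := by
            have e1 := integral_add (μ := Q) (hu_int.const_mul t)
              ((hf_int.add (integrable_const (2:ℝ))).div_const t)
            have e2 := integral_add (μ := Q) hf_int (integrable_const (2:ℝ))
            simp only [Pi.add_apply] at e1 e2
            rw [integral_div, e1, integral_const_mul, integral_div, e2, hf_int1]
            simp only [integral_const, measure_univ, ENNReal.toReal_one, smul_eq_mul, one_mul]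
            norm_num
            exact Or.inl rfl
      have hcomp : (t * A + 3/t)/2 = Real.sqrt (3 * A) := by
        rw [ht_def]
        rw [Real.sqrt_mul (by norm_num : (0:ℝ) ≤ 3)]
        have hsA : Real.sqrt A ≠ 0 := (Real.sqrt_pos.2 hA0).ne'
        have h3 : Real.sqrt 3 ≠ 0 := by positivity
        have hAA : Real.sqrt A * Real.sqrt A = A := Real.mul_self_sqrt hA_nonneg
        have h33 : Real.sqrt 3 * Real.sqrt 3 = 3 := Real.mul_self_sqrt (by norm_num)
        field_simp
        nlinarith [hAA, h33]
      rw [hcomp] at hIle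
      calc I^2 ≤ Real.sqrt (3*A)^2 := by
            apply pow_le_pow_left₀ hI_nonneg hIle
        _ = 3 * A := Real.sq_sqrt (by positivity)
  -- TV bound for each measurable set
  have hTV : ∀ s : Set X, MeasurableSet s → |(P s).toReal - (Q s).toReal| ≤ I/2 := by
    intro s hs
    set S : Set X := {x | 1 ≤ f x} with hS_def
    have hS : MeasurableSet S := measurableSet_le measurable_const hf_meas
    have hd0 : ∫ x, (f x - 1) ∂Q = 0 := by
      rw [integral_sub hf_int (integrable_const 1), hf_int1]; simp
    have hsplit : (∫ x in S, (f x - 1) ∂Q) + ∫ x in Sᶜ, (f x - 1) ∂Q = 0 := by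
      rw [integral_add_compl hS hd_int, hd0]
    have hS_eq : ∫ x in S, |f x - 1| ∂Q = ∫ x in S, (f x - 1) ∂Q :=
      setIntegral_congr_fun hS fun x hx => abs_of_nonneg (by simp [hS_def] at hx; linarith)
    have hSc_eq : ∫ x in Sᶜ, |f x - 1| ∂Q = - ∫ x in Sᶜ, (f x - 1) ∂Q := by
      rw [← integral_neg]
      exact setIntegral_congr_fun hS.compl fun x hx => by
        simp [hS_def] at hx
        exact abs_of_nonpos (by linarith)
    have hIsplit : I = (∫ x in S, |f x - 1| ∂Q) + ∫ x in Sᶜ, |f x - 1| ∂Q :=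
      (integral_add_compl hS habs_int).symm
    have hShalf : ∫ x in S, (f x - 1) ∂Q = I/2 := by
      rw [hIsplit, hS_eq, hSc_eq]; linarith
    have hSchalf : ∫ x in Sᶜ, (f x - 1) ∂Q = -(I/2) := by linarith
    have hPQs : (P s).toReal - (Q s).toReal = ∫ x in s, (f x - 1) ∂Q := by
      rw [integral_sub hf_int.integrableOn (integrableOn_const (measure_lt_top Q s).ne)]
      rw [hf_def, Measure.setIntegral_toReal_rnDeriv hPQ s]
      simp
      rfl
    have hub : ∫ x in s, (f x - 1) ∂Q ≤ I/2 := by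
      rw [← hShalf]
      have h1 : ∫ x in s, (f x - 1) ∂Q
          = (∫ x in s ∩ S, (f x - 1) ∂Q) + ∫ x in s \ S, (f x - 1) ∂Q :=
        (integral_inter_add_diff hS hd_int.integrableOn).symm
      have h2 : ∫ x in s \ S, (f x - 1) ∂Q ≤ 0 :=
        setIntegral_nonpos (hs.diff hS) fun x hx => by
          have := hx.2; simp [hS_def] at this; linarith
      have h3 : ∫ x in s ∩ S, (f x - 1) ∂Q ≤ ∫ x in S, (f x - 1) ∂Q := by
        apply setIntegral_mono_set hd_int.integrableOn
        · exact (ae_restrict_iff' hS).2 (ae_of_all _ fun x hx => by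
            simp [hS_def] at hx; simp; linarith)
        · exact HasSubset.Subset.eventuallyLE Set.inter_subset_right
      linarith
    have hlb : -(I/2) ≤ ∫ x in s, (f x - 1) ∂Q := by
      rw [← hSchalf]
      have h1 : ∫ x in s, (f x - 1) ∂Q
          = (∫ x in s ∩ Sᶜ, (f x - 1) ∂Q) + ∫ x in s \ Sᶜ, (f x - 1) ∂Q :=
        (integral_inter_add_diff hS.compl hd_int.integrableOn).symm
      have h2 : 0 ≤ ∫ x in s \ Sᶜ, (f x - 1) ∂Q :=
        setIntegral_nonneg (hs.diff hS.compl) fun x hx => by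
          have := hx.2; simp [hS_def] at this; linarith
      have h3 : ∫ x in Sᶜ, (f x - 1) ∂Q ≤ ∫ x in s ∩ Sᶜ, (f x - 1) ∂Q := by
        have h4 : ∫ x in s ∩ Sᶜ, -(f x - 1) ∂Q ≤ ∫ x in Sᶜ, -(f x - 1) ∂Q := by
          apply setIntegral_mono_set hd_int.neg.integrableOn
          · exact (ae_restrict_iff' hS.compl).2 (ae_of_all _ fun x hx => by
              simp [hS_def] at hx; simp; linarith)
          · exact HasSubset.Subset.eventuallyLE Set.inter_subset_right
        rw [integral_neg, integral_neg] at h4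
        linarith
      linarith
    rw [hPQs, abs_le]
    exact ⟨hlb, hub⟩
  -- conclude
  have hgoal : I/2 ≤ Real.sqrt (KL / 2) := by
    rw [Real.le_sqrt (by positivity) (by linarith)]
    nlinarith [hI_sq, hA_le]
  rw [hKL]
  apply ciSup_le
  intro s
  exact le_trans (hTV s.1 s.2) hgoal
end

section
/- Let x : ℝ≥0 → ℝ be continuous and define y(u) = x(τ̄_u(x)) where τ̄ is the inverse of ρ̄_t(x) = ∫₀^t σ̄_h²(s,x) ds. Define recursively Ā₀(y) = 0 and, for t ∈ (t_{i−1}, t_i], Ā_t(y) = Ā_{t_{i−1}}(y) + σ²(y(Ā_{t_{i−1}}(y))) (t − t_{i−1}). Then Ā_t(y) = ρ̄_t(x) for all t ≥ 0, and the inverse T̄_u(y) = inf{t : Ā_t(y) ≥ u} equals τ̄_u(x). -/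
open MeasureTheory Set

/-- for a continuous path `x` and `y(u) = x(τ̄_u(x))`, the recursively defined clock
`Ā₀(y) = 0`, `Ā_t(y) = Ā_{t_{i-1}}(y) + σ²(y(Ā_{t_{i-1}}(y)))(t - t_{i-1})` for
`t ∈ (t_{i-1}, t_i]`, satisfies `Ā_t(y) = ρ̄_t(x)` for all `t ≥ 0`, and its inverse
`T̄_u(y) = inf{t : Ā_t(y) ≥ u}` equals `τ̄_u(x)`. -/
theorem stmt9 (σ : ℝ → ℝ) (σ0 σ1 : ℝ) (hσ0 : 0 < σ0) (hσmeas : Measurable σ)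
    (hlb : ∀ z, σ0 ^ 2 ≤ (σ z) ^ 2) (hub : ∀ z, (σ z) ^ 2 ≤ σ1 ^ 2)
    (h : ℝ) (hh : 0 < h)
    (x : ℝ → ℝ) (hx : Continuous x)
    (σbar : ℝ → ℝ) (hσbar : σbar = fun s => σ (x (h * ((⌈s / h⌉ : ℝ) - 1))))
    (ρbar : ℝ → ℝ) (hρbar : ρbar = fun t => ∫ s in (0:ℝ)..t, (σbar s) ^ 2)
    (τbar : ℝ → ℝ) (hτbar : τbar = fun u => sInf {t | 0 ≤ t ∧ u ≤ ρbar t})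
    (y : ℝ → ℝ) (hy : y = fun u => x (τbar u))
    -- the recursion along the grid: `A i = Ā_{t_i}(y)`
    (A : ℕ → ℝ) (hA0 : A 0 = 0)
    (hArec : ∀ i : ℕ, A (i + 1) = A i + (σ (y (A i))) ^ 2 * h)
    -- the piecewise-defined clock `Ā_t(y)`
    (Abar : ℝ → ℝ)
    (hAbar0 : Abar 0 = 0)
    (hAbar : ∀ (i : ℕ) t, (i : ℝ) * h < t → t ≤ ((i : ℝ) + 1) * h →
      Abar t = A i + (σ (y (A i))) ^ 2 * (t - (i : ℝ) * h))
    (Tbar : ℝ → ℝ) (hTbar : Tbar = fun u => sInf {t | 0 ≤ t ∧ u ≤ Abar t}) :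
    (∀ t, 0 ≤ t → Abar t = ρbar t) ∧
    (∀ u, 0 ≤ u → Tbar u = τbar u) := by
  -- measurability of the integrand
  have hmono0 : Monotone fun s : ℝ => h * ((⌈s / h⌉ : ℝ) - 1) := by
    intro a b hab
    have h1 : ⌈a / h⌉ ≤ ⌈b / h⌉ := Int.ceil_le_ceil (by gcongr)
    have h2 : ((⌈a / h⌉ : ℤ) : ℝ) ≤ ((⌈b / h⌉ : ℤ) : ℝ) := by exact_mod_cast h1
    nlinarith
  have hmeasf : Measurable fun s : ℝ => (σbar s) ^ 2 := by
    rw [hσbar]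
    exact (hσmeas.comp (hx.measurable.comp hmono0.measurable)).pow_const 2
  -- interval integrability
  have hint : ∀ a b : ℝ, IntervalIntegrable (fun s => (σbar s) ^ 2) volume a b := by
    intro a b
    rw [intervalIntegrable_iff]
    apply Measure.integrableOn_of_bounded (M := σ1 ^ 2)
      (by rw [uIoc]; exact measure_Ioc_lt_top.ne) hmeasf.aestronglyMeasurable
    filter_upwards with s
    rw [Real.norm_eq_abs, abs_of_nonneg (sq_nonneg _), hσbar]
    exact hub _
  -- increment of ρbar over a single grid interval
  have hstep : ∀ (i : ℕ) t, (i : ℝ) * h < t → t ≤ ((i : ℝ) + 1) * h →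
      ρbar t = ρbar ((i : ℝ) * h) + (σ (x ((i : ℝ) * h))) ^ 2 * (t - (i : ℝ) * h) := by
    intro i t h1 h2
    have key : ∀ s ∈ Ioc ((i : ℝ) * h) t, (σbar s) ^ 2 = (σ (x ((i : ℝ) * h))) ^ 2 := by
      intro s hs
      rw [hσbar]
      have hceil : ⌈s / h⌉ = (i : ℤ) + 1 := by
        rw [Int.ceil_eq_iff]
        constructor
        · push_cast
          rw [show ((i : ℝ) + 1 - 1) = (i : ℝ) by ring, lt_div_iff₀ hh]
          exact hs.1
        · push_cast
          rw [div_le_iff₀ hh]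
          calc s ≤ t := hs.2
          _ ≤ ((i : ℝ) + 1) * h := h2
      have : h * ((⌈s / h⌉ : ℝ) - 1) = (i : ℝ) * h := by
        rw [hceil]; push_cast; ring
      simp only [this]
    have hsub : ρbar t - ρbar ((i : ℝ) * h) = ∫ s in ((i : ℝ) * h)..t, (σbar s) ^ 2 := by
      rw [hρbar]
      exact intervalIntegral.integral_interval_sub_left (hint 0 t) (hint 0 _)
    have hconst : ∫ s in ((i : ℝ) * h)..t, (σbar s) ^ 2
        = (σ (x ((i : ℝ) * h))) ^ 2 * (t - (i : ℝ) * h) := by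
      rw [intervalIntegral.integral_of_le h1.le, setIntegral_congr_fun measurableSet_Ioc key,
        setIntegral_const, measureReal_def, Real.volume_Ioc, ENNReal.toReal_ofReal (by linarith), smul_eq_mul,
        mul_comm]
    linarith
  -- strict monotonicity of ρbar
  have hρmono : StrictMono ρbar := by
    intro a b hab
    have hsub : ρbar b - ρbar a = ∫ s in a..b, (σbar s) ^ 2 := by
      rw [hρbar]
      exact intervalIntegral.integral_interval_sub_left (hint 0 b) (hint 0 a)
    have hge : σ0 ^ 2 * (b - a) ≤ ∫ s in a..b, (σbar s) ^ 2 := by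
      calc σ0 ^ 2 * (b - a) = ∫ _ in a..b, σ0 ^ 2 := by
            rw [intervalIntegral.integral_const, smul_eq_mul, mul_comm]
        _ ≤ _ := intervalIntegral.integral_mono_on hab.le intervalIntegrable_const (hint a b)
            (fun s _ => by rw [hσbar]; exact hlb _)
    nlinarith [pow_pos hσ0 2]
  -- τbar inverts ρbar on [0, ∞)
  have hτρ : ∀ t : ℝ, 0 ≤ t → τbar (ρbar t) = t := by
    intro t ht
    rw [hτbar]
    refine le_antisymm (csInf_le ⟨t, fun s hs => ?_⟩ ⟨ht, le_refl _⟩)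
      (le_csInf ⟨t, ht, le_refl _⟩ fun s hs => ?_)
    · exact hρmono.le_iff_le.mp hs.2
    · exact hρmono.le_iff_le.mp hs.2
  have hρ0 : ρbar 0 = 0 := by rw [hρbar]; simp
  -- the grid recursion matches ρbar on the grid
  have hAρ : ∀ i : ℕ, A i = ρbar ((i : ℝ) * h) := by
    intro i
    induction i with
    | zero => simpa [hA0] using hρ0.symm
    | succ i ih =>
      have hyi : y (A i) = x ((i : ℝ) * h) := by
        simp only [hy, ih]
        rw [hτρ _ (by positivity)]
      have hs := hstep i (((i : ℝ) + 1) * h) (by nlinarith) le_rfl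
      rw [hArec i, hyi, ih]
      push_cast
      rw [hs]
      ring
  -- Part 1
  have part1 : ∀ t, 0 ≤ t → Abar t = ρbar t := by
    intro t ht
    rcases eq_or_lt_of_le ht with h0 | h0
    · rw [← h0, hAbar0, hρ0]
    · set i : ℕ := (⌈t / h⌉ - 1).toNat with hi
      have hpos : 0 < ⌈t / h⌉ := Int.ceil_pos.mpr (by positivity)
      have hcast : ((i : ℤ) : ℝ) = (⌈t / h⌉ : ℝ) - 1 := by
        rw [hi]
        rw [Int.toNat_of_nonneg (by omega)]
        push_cast
        ring
      have hcast' : (i : ℝ) = (⌈t / h⌉ : ℝ) - 1 := by exact_mod_cast hcast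
      have hlt : (i : ℝ) * h < t := by
        rw [hcast']
        have := Int.ceil_lt_add_one (t / h)
        have h2 : (⌈t / h⌉ : ℝ) - 1 < t / h := by linarith
        calc ((⌈t / h⌉ : ℝ) - 1) * h < (t / h) * h := by
              exact mul_lt_mul_of_pos_right h2 hh
          _ = t := by field_simp
      have hle : t ≤ ((i : ℝ) + 1) * h := by
        rw [hcast']
        have := Int.le_ceil (t / h)
        calc t = (t / h) * h := by field_simp
          _ ≤ (⌈t / h⌉ : ℝ) * h := mul_le_mul_of_nonneg_right this hh.le
          _ = ((⌈t / h⌉ : ℝ) - 1 + 1) * h := by ring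
      have hyi : y (A i) = x ((i : ℝ) * h) := by
        simp only [hy, hAρ i]
        rw [hτρ _ (by positivity)]
      rw [hAbar i t hlt hle, hyi, hAρ i, hstep i t hlt hle]
  refine ⟨part1, fun u _ => ?_⟩
  simp only [hTbar, hτbar]
  have : {t : ℝ | 0 ≤ t ∧ u ≤ Abar t} = {t : ℝ | 0 ≤ t ∧ u ≤ ρbar t} :=
    Set.ext fun t => and_congr_right fun ht => by rw [part1 t ht]
  rw [this]
end
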